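/- Let A ∈ SL_n(ℝ) be well-rounded with S₁(A) = {±v₁,...,±v_n} for linearly independent v₁,...,v_n ∈ ℤ^n, and identify Δ (the positive diagonal subgroup of SL_n(ℝ)) with ℝ^{n-1} via (a₁,...,a_{n-1}) ↦ diag(e^{a₁},...,e^{a_{n-1}}, e^{-a₁-...-a_{n-1}}). Let B be the matrix with columns v₁,...,v_n. Then there exists ε > 0 such that for all x ∈ ℝ^{n-1} with 0 < |x| ≤ ε, the element A·B·D(x)·B⁻¹ is not well-rounded, where D(x) ∈ Δ is the diagonal matrix corresponding to x. -/

import Mathlib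

open Matrix Submodule Module

/-- The Euclidean norm of a vector in `ℝⁿ`. -/
noncomputable def euclNorm {n : ℕ} (w : Fin n → ℝ) : ℝ := Real.sqrt (∑ i, (w i) ^ 2)

/-- The real vector associated to an integer vector. -/
def intVec {n : ℕ} (v : Fin n → ℤ) : Fin n → ℝ := fun i => (v i : ℝ)

/-- The systole (first minimum) of the lattice `Aℤⁿ`. -/
noncomputable def syst1 {n : ℕ} (A : Matrix (Fin n) (Fin n) ℝ) : ℝ :=
  sInf {r : ℝ | ∃ v : Fin n → ℤ, v ≠ 0 ∧ euclNorm (A.mulVec (intVec v)) = r}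

/-- The `i`-th systole (Minkowski's `i`-th successive minimum) of the lattice `Aℤⁿ`. -/
noncomputable def systI {n : ℕ} (A : Matrix (Fin n) (Fin n) ℝ) (i : ℕ) : ℝ :=
  sInf {r : ℝ | i ≤ Module.finrank ℝ (Submodule.span ℝ
    (intVec '' {v : Fin n → ℤ | euclNorm (A.mulVec (intVec v)) < r}))}

/-- The set of shortest (nonzero) integer vectors of `A`. -/
noncomputable def S1 {n : ℕ} (A : Matrix (Fin n) (Fin n) ℝ) : Set (Fin n → ℤ) :=
  {v | v ≠ 0 ∧ euclNorm (A.mulVec (intVec v)) = syst1 A}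

/-- `A` is well-rounded if its shortest vectors span `ℝⁿ`. -/
noncomputable def WellRounded {n : ℕ} (A : Matrix (Fin n) (Fin n) ℝ) : Prop :=
  Submodule.span ℝ (intVec '' S1 A) = ⊤

/-- The span of the integer vectors realized up to the `i`-th minimum. -/
noncomputable def LambdaI {n : ℕ} (A : Matrix (Fin n) (Fin n) ℝ) (i : ℕ) :
    Submodule ℝ (Fin n → ℝ) :=
  Submodule.span ℝ (intVec '' {v : Fin n → ℤ | euclNorm (A.mulVec (intVec v)) ≤ systI A i})

/-- The real matrix associated to an element of `SL_n(ℤ)`. -/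
def SLZtoR {n : ℕ} (γ : Matrix.SpecialLinearGroup (Fin n) ℤ) : Matrix (Fin n) (Fin n) ℝ :=
  (γ : Matrix (Fin n) (Fin n) ℤ).map (Int.cast)

/-!
Write `M(x) = A·B·D(x)·B⁻¹`. Since `B⁻¹ vᵢ` is the `i`-th basis vector, `M(x) vᵢ = e^{dᵢ(x)} A vᵢ`,
where `d(x) = (x₁, …, x_{n-1}, -x₁ - ⋯ - x_{n-1})`, so the vectors `±vᵢ` have `M(x)`-length
`e^{dᵢ(x)} λ₁(A)`. By discreteness every other nonzero `w ∈ ℤⁿ` satisfies `|A w| ≥ λ₁(A) + δ` for a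
fixed `δ > 0`, and `M(x)` is a small relative perturbation of `A`, so for `x` small these `w` keep
`|M(x) w| > λ₁(A)`. As `∑ dᵢ(x) = 0` and `d(x) ≠ 0`, the minimum of `d(x)` is negative and not
attained at every index, so the shortest vectors of `M(x)` are the `±vᵢ` with `dᵢ(x)` minimal, and
these span a proper subspace.
-/

open Filter Topology
open scoped Matrix.Norms.L2Operator

lemma euclNorm_eq_norm_toLp {n : ℕ} (w : Fin n → ℝ) : euclNorm w = ‖WithLp.toLp 2 w‖ := by
  simp [euclNorm, EuclideanSpace.norm_eq]

lemma euclNorm_mulVec_le {n : ℕ} (C : Matrix (Fin n) (Fin n) ℝ) (w : Fin n → ℝ) :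
    euclNorm (C *ᵥ w) ≤ ‖C‖ * euclNorm w := by
  rw [euclNorm_eq_norm_toLp, euclNorm_eq_norm_toLp]
  exact l2_opNorm_mulVec C (WithLp.toLp 2 w)

lemma exists_pos_forall_euclNorm_le_of_eventually {n : ℕ} {p : (Fin n → ℝ) → Prop}
    (h : ∀ᶠ x in 𝓝 0, p x) : ∃ ε > 0, ∀ x, euclNorm x ≤ ε → p x := by
  have h' : ∀ᶠ y in 𝓝 (0 : EuclideanSpace ℝ (Fin n)), p y.ofLp :=
    (PiLp.continuous_ofLp 2 _).tendsto 0 h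
  obtain ⟨r, hr, hball⟩ := Metric.eventually_nhds_iff.1 h'
  refine ⟨r / 2, half_pos hr, fun x hx => hball (y := WithLp.toLp 2 x) ?_⟩
  rw [dist_zero_right, ← euclNorm_eq_norm_toLp]
  linarith

lemma intVec_neg {n : ℕ} (v : Fin n → ℤ) : intVec (-v) = -intVec v := by
  ext i; simp [intVec]

section Minimum

variable {n : ℕ} (M : Matrix (Fin n) (Fin n) ℝ)

lemma syst1_nonneg : 0 ≤ syst1 M :=
  Real.sInf_nonneg (by rintro _ ⟨w, -, rfl⟩; exact Real.sqrt_nonneg _)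

lemma syst1_le {w : Fin n → ℤ} (hw : w ≠ 0) : syst1 M ≤ euclNorm (M *ᵥ intVec w) :=
  csInf_le ⟨0, by rintro _ ⟨u, -, rfl⟩; exact Real.sqrt_nonneg _⟩ ⟨w, hw, rfl⟩

lemma syst1_eq_of_forall_le {w₀ : Fin n → ℤ} (hw₀ : w₀ ≠ 0)
    (h : ∀ w ≠ 0, euclNorm (M *ᵥ intVec w₀) ≤ euclNorm (M *ᵥ intVec w)) :
    syst1 M = euclNorm (M *ᵥ intVec w₀) :=
  (syst1_le M hw₀).antisymm (le_csInf ⟨_, w₀, hw₀, rfl⟩ (by rintro _ ⟨w, hw, rfl⟩; exact h w hw))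

variable {M}

lemma finite_setOf_euclNorm_mulVec_le (hM : IsUnit M) (R : ℝ) :
    {w : Fin n → ℤ | euclNorm (M *ᵥ intVec w) ≤ R}.Finite := by
  set K := ‖M⁻¹‖
  refine ((isCompact_closedBall (0 : Fin n → ℤ) (K * |R|)).finite_of_discrete).subset fun w hw => ?_
  rw [Metric.mem_closedBall, dist_zero_right, pi_norm_le_iff_of_nonneg (by positivity)]
  intro i
  have hw' : intVec w = M⁻¹ *ᵥ (M *ᵥ intVec w) := by
    rw [mulVec_mulVec, nonsing_inv_mul _ ((isUnit_iff_isUnit_det M).1 hM), one_mulVec]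
  calc ‖w i‖ = ‖(WithLp.toLp 2 (intVec w)).ofLp i‖ := by simp [intVec, Int.norm_eq_abs]
    _ ≤ euclNorm (intVec w) := (euclNorm_eq_norm_toLp _).symm ▸ PiLp.norm_apply_le _ _
    _ = euclNorm (M⁻¹ *ᵥ (M *ᵥ intVec w)) := by rw [← hw']
    _ ≤ K * euclNorm (M *ᵥ intVec w) := euclNorm_mulVec_le _ _
    _ ≤ K * |R| := by gcongr; exact le_trans hw (le_abs_self R)

lemma exists_pos_syst1_add_le (hM : IsUnit M) :
    ∃ δ > 0, ∀ w ≠ 0, w ∉ S1 M → syst1 M + δ ≤ euclNorm (M *ᵥ intVec w) := by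
  set T := {w | euclNorm (M *ᵥ intVec w) ≤ syst1 M + 1} ∩ {w | w ≠ 0 ∧ w ∉ S1 M}
  have hT : T.Finite := (finite_setOf_euclNorm_mulVec_le hM _).inter_of_left _
  have hlt : ∀ w ∈ T, syst1 M < euclNorm (M *ᵥ intVec w) := fun w ⟨_, hw, hwS⟩ =>
    (syst1_le M hw).lt_of_ne fun h => hwS ⟨hw, h.symm⟩
  have hev : ∀ᶠ δ in 𝓝 (0 : ℝ), δ < 1 ∧ ∀ w ∈ T, syst1 M + δ ≤ euclNorm (M *ᵥ intVec w) := by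
    refine (eventually_lt_nhds one_pos).and (hT.eventually_all.2 fun w hw => ?_)
    filter_upwards [eventually_lt_nhds (sub_pos.2 (hlt w hw))] with δ hδ
    linarith
  obtain ⟨δ, ⟨hδ1, hδT⟩, hδ⟩ :=
    ((hev.filter_mono (nhdsWithin_le_nhds (s := Set.Ioi 0))).and self_mem_nhdsWithin).exists
  refine ⟨δ, hδ, fun w hw hwS => ?_⟩
  by_cases hR : euclNorm (M *ᵥ intVec w) ≤ syst1 M + 1
  · exact hδT w ⟨hR, hw, hwS⟩
  · linarith

end Minimum

section Perturbation

variable {n : ℕ}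

lemma one_sub_norm_mul_euclNorm_mulVec_le {A M : Matrix (Fin n) (Fin n) ℝ} (hA : IsUnit A)
    (w : Fin n → ℝ) :
    (1 - ‖(M - A) * A⁻¹‖) * euclNorm (A *ᵥ w) ≤ euclNorm (M *ᵥ w) := by
  have hAw : A *ᵥ w = M *ᵥ w - ((M - A) * A⁻¹) *ᵥ (A *ᵥ w) := by
    rw [mulVec_mulVec, Matrix.mul_assoc, nonsing_inv_mul _ ((isUnit_iff_isUnit_det A).1 hA),
      Matrix.mul_one, sub_mulVec, sub_sub_cancel]
  have htri : euclNorm (A *ᵥ w) ≤ euclNorm (M *ᵥ w) + euclNorm (((M - A) * A⁻¹) *ᵥ (A *ᵥ w)) := by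
    conv_lhs => rw [hAw]
    simp only [euclNorm_eq_norm_toLp, WithLp.toLp_sub]
    exact norm_sub_le _ _
  linarith [euclNorm_mulVec_le ((M - A) * A⁻¹) (A *ᵥ w)]

lemma eventually_forall_lt_euclNorm_mulVec {X : Type*} [TopologicalSpace X]
    {M : X → Matrix (Fin n) (Fin n) ℝ} {x₀ : X} (hM : ContinuousAt M x₀) (hA : IsUnit (M x₀))
    {W : Set (Fin n → ℝ)} {m δ : ℝ} (hm : 0 ≤ m) (hδ : 0 < δ)
    (hW : ∀ w ∈ W, m + δ ≤ euclNorm (M x₀ *ᵥ w)) :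
    ∀ᶠ x in 𝓝 x₀, ∀ w ∈ W, m < euclNorm (M x *ᵥ w) := by
  have hP : Tendsto (fun x => ‖(M x - M x₀) * (M x₀)⁻¹‖) (𝓝 x₀) (𝓝 0) := by
    simpa using (((hM.sub (continuousAt_const (y := M x₀))).mul
      (continuousAt_const (y := (M x₀)⁻¹))).norm).tendsto
  filter_upwards [hP.eventually (eventually_lt_nhds (div_pos hδ (by linarith : 0 < m + δ)))]
    with x hx w hw
  rw [lt_div_iff₀ (by linarith)] at hx
  nlinarith [one_sub_norm_mul_euclNorm_mulVec_le (M := M x) hA w, hW w hw]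

end Perturbation

section ShortestVectors

variable {n : ℕ}

lemma not_wellRounded_of_S1_subset {ι : Type*} {M : Matrix (Fin n) (Fin n) ℝ}
    {v : ι → Fin n → ℤ} (hv : LinearIndependent ℝ fun i => intVec (v i)) {s : Set ι} {k : ι}
    (hk : k ∉ s) (hS : S1 M ⊆ {w | ∃ i ∈ s, w = v i ∨ w = -(v i)}) : ¬ WellRounded M := by
  intro hM
  have hle : span ℝ (intVec '' S1 M) ≤ span ℝ ((fun i => intVec (v i)) '' s) := span_le.2 <| by
    rintro _ ⟨w, hw, rfl⟩
    obtain ⟨i, hi, rfl | rfl⟩ := hS hw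
    · exact subset_span ⟨i, hi, rfl⟩
    · rw [intVec_neg]
      exact neg_mem (subset_span ⟨i, hi, rfl⟩)
  rw [WellRounded] at hM
  exact hv.notMem_span_image hk (hle (hM ▸ mem_top))

lemma isUnit_of_columns_intVec {B : Matrix (Fin n) (Fin n) ℝ} {v : Fin n → Fin n → ℤ}
    (hv : LinearIndependent ℝ fun i => intVec (v i)) (hB : B = of fun i j => (v j i : ℝ)) :
    IsUnit B :=
  linearIndependent_cols_iff_isUnit.1 (hB ▸ hv)

lemma mul_mul_diagonal_mul_inv_mulVec {A B : Matrix (Fin n) (Fin n) ℝ} {v : Fin n → Fin n → ℤ}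
    (hB : B = of fun i j => (v j i : ℝ)) (hBu : IsUnit B) (d : Fin n → ℝ) (i : Fin n) :
    (A * B * diagonal d * B⁻¹) *ᵥ intVec (v i) = d i • (A *ᵥ intVec (v i)) := by
  have hBe : B *ᵥ Pi.single i 1 = intVec (v i) := by
    rw [mulVec_single_one, hB]; rfl
  have hBinv : B⁻¹ *ᵥ intVec (v i) = Pi.single i 1 := by
    rw [← hBe, mulVec_mulVec, nonsing_inv_mul _ ((isUnit_iff_isUnit_det B).1 hBu), one_mulVec]
  rw [← mulVec_mulVec, hBinv, ← mulVec_mulVec, diagonal_mulVec_single, ← smul_eq_mul (d i),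
    Pi.single_smul', mulVec_smul, ← mulVec_mulVec, hBe]

end ShortestVectors

theorem not_wellRounded_mul_diagonal_exp_mul_inv {n : ℕ} {A B : Matrix (Fin n) (Fin n) ℝ}
    (hA : IsUnit A) {v : Fin n → Fin n → ℤ} (hv : LinearIndependent ℝ fun i => intVec (v i))
    (hB : B = of fun i j => (v j i : ℝ)) {m : ℝ} (hAv : ∀ i, euclNorm (A *ᵥ intVec (v i)) = m)
    {d : Fin n → ℝ} {j k : Fin n} (hj : ∀ i, d j ≤ d i) (hj0 : d j ≤ 0) (hk : d k ≠ d j)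
    (hgap : ∀ w ≠ 0, w ∉ {w | ∃ i, w = v i ∨ w = -(v i)} →
      m < euclNorm ((A * B * diagonal (fun i => Real.exp (d i)) * B⁻¹) *ᵥ intVec w)) :
    ¬ WellRounded (A * B * diagonal (fun i => Real.exp (d i)) * B⁻¹) := by
  set M := A * B * diagonal (fun i => Real.exp (d i)) * B⁻¹
  have hv0 : ∀ i, v i ≠ 0 := fun i h => hv.ne_zero i (by ext; simp [h, intVec])
  have hm : 0 < m := by
    rw [← hAv j, euclNorm_eq_norm_toLp, norm_pos_iff, Ne, WithLp.toLp_eq_zero,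
      (mulVec_injective_iff_isUnit.2 hA).eq_iff' (mulVec_zero A)]
    exact hv.ne_zero j
  have hMv : ∀ i, euclNorm (M *ᵥ intVec (v i)) = Real.exp (d i) * m := fun i => by
    rw [mul_mul_diagonal_mul_inv_mulVec hB (isUnit_of_columns_intVec hv hB), euclNorm_eq_norm_toLp,
      WithLp.toLp_smul, norm_smul, Real.norm_of_nonneg (Real.exp_pos _).le,
      ← euclNorm_eq_norm_toLp, hAv]
  have hMv_neg : ∀ i, euclNorm (M *ᵥ intVec (-v i)) = Real.exp (d i) * m := fun i => by
    rw [intVec_neg, mulVec_neg, euclNorm_eq_norm_toLp, WithLp.toLp_neg, norm_neg,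
      ← euclNorm_eq_norm_toLp, hMv]
  have hMv_le : ∀ i, Real.exp (d j) * m ≤ Real.exp (d i) * m := fun i => by gcongr; exact hj i
  have hmin_le : Real.exp (d j) * m ≤ m := by
    nlinarith [Real.exp_le_one_iff.2 hj0]
  have hsyst : syst1 M = Real.exp (d j) * m := by
    rw [← hMv j]
    refine syst1_eq_of_forall_le M (hv0 j) fun w hw => ?_
    by_cases hwv : ∃ i, w = v i ∨ w = -(v i)
    · obtain ⟨i, rfl | rfl⟩ := hwv
      · rw [hMv j, hMv i]; exact hMv_le i
      · rw [hMv j, hMv_neg i]; exact hMv_le i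
    · rw [hMv j]; exact hmin_le.trans (hgap w hw hwv).le
  refine not_wellRounded_of_S1_subset hv (s := {i | d i = d j}) hk fun w ⟨hw, hwM⟩ => ?_
  rw [hsyst] at hwM
  by_cases hwv : ∃ i, w = v i ∨ w = -(v i)
  · obtain ⟨i, hi⟩ := hwv
    have hMw : euclNorm (M *ᵥ intVec w) = Real.exp (d i) * m := by
      rcases hi with rfl | rfl
      exacts [hMv i, hMv_neg i]
    rw [hMw, mul_left_inj' hm.ne', Real.exp_eq_exp] at hwM
    exact ⟨i, hwM, hi⟩
  · exact absurd (hgap w hw hwv) (by rw [hwM]; exact not_lt.2 hmin_le)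

lemma exists_isMin_neg_and_ne_of_sum_eq_zero {ι : Type*} [Fintype ι] {d : ι → ℝ}
    (hsum : ∑ i, d i = 0) (hd : d ≠ 0) : ∃ j, (∀ i, d j ≤ d i) ∧ d j < 0 ∧ ∃ k, d k ≠ d j := by
  obtain ⟨i₀, -⟩ := Function.ne_iff.1 hd
  have : Nonempty ι := ⟨i₀⟩
  obtain ⟨j, hj⟩ := Finite.exists_min d
  have hj0 : d j < 0 := by
    by_contra! h
    exact hd (funext fun i =>
      (Finset.sum_eq_zero_iff_of_nonneg fun i _ => h.trans (hj i)).1 hsum i (Finset.mem_univ i))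
  refine ⟨j, hj, hj0, ?_⟩
  by_contra! h
  exact (Finset.sum_neg (fun i _ => (h i).trans_lt hj0) ⟨i₀, Finset.mem_univ _⟩).ne hsum

/-- The exponents of `D(x) = diag(e^{x₁}, …, e^{x_{n-1}}, e^{-x₁-⋯-x_{n-1}})`. -/
def diagExponent {n : ℕ} (x : Fin (n - 1) → ℝ) (j : Fin n) : ℝ :=
  if h : (j : ℕ) < n - 1 then x ⟨j, h⟩ else -∑ i, x i

section DiagExponent

variable {n : ℕ}

lemma continuous_diagExponent : Continuous (diagExponent (n := n)) :=
  continuous_pi fun j => by unfold diagExponent; split_ifs <;> fun_prop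

lemma diagExponent_zero : diagExponent (0 : Fin (n - 1) → ℝ) = 0 := by
  ext j; simp [diagExponent]

lemma sum_diagExponent (x : Fin (n - 1) → ℝ) : ∑ j, diagExponent x j = 0 := by
  cases n with
  | zero => simp
  | succ k =>
    rw [Fin.sum_univ_castSucc]
    simp [diagExponent]

lemma diagExponent_ne_zero {x : Fin (n - 1) → ℝ} (hx : x ≠ 0) : diagExponent x ≠ 0 := by
  obtain ⟨i, hi⟩ := Function.ne_iff.1 hx
  refine Function.ne_iff.2 ⟨⟨i, i.isLt.trans_le (n.sub_le 1)⟩, ?_⟩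
  simpa [diagExponent] using hi

end DiagExponent

theorem stmt15_general (n : ℕ) (A : Matrix.SpecialLinearGroup (Fin n) ℝ)
    (v : Fin n → (Fin n → ℤ))
    (hv : LinearIndependent ℝ fun i => intVec (v i))
    (hS : S1 (A : Matrix (Fin n) (Fin n) ℝ) = {w | ∃ i, w = v i ∨ w = -(v i)})
    (B : Matrix (Fin n) (Fin n) ℝ)
    (hB : B = Matrix.of fun i j => ((v j i : ℝ))) :
    ∃ ε > (0 : ℝ), ∀ x : Fin (n - 1) → ℝ, 0 < euclNorm x → euclNorm x ≤ ε →
      ¬ WellRounded ((A : Matrix (Fin n) (Fin n) ℝ) * B *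
        Matrix.diagonal (fun j : Fin n =>
          if h : (j : ℕ) < n - 1 then Real.exp (x ⟨j, h⟩)
          else Real.exp (-∑ i, x i)) * B⁻¹) := by
  set A' := (A : Matrix (Fin n) (Fin n) ℝ)
  have hA : IsUnit A' := (isUnit_iff_isUnit_det _).2 (by simp [A'])
  obtain ⟨δ, hδ, hgap⟩ := exists_pos_syst1_add_le hA
  set M := fun x : Fin (n - 1) → ℝ => A' * B * diagonal (fun j => Real.exp (diagExponent x j)) * B⁻¹
  have hM0 : M 0 = A' := by
    simp [M, diagExponent_zero, mul_nonsing_inv_cancel_right _ _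
      ((isUnit_iff_isUnit_det B).1 (isUnit_of_columns_intVec hv hB))]
  have hMc : Continuous M := by
    have := continuous_diagExponent (n := n)
    fun_prop
  obtain ⟨ε, hε, hεM⟩ := exists_pos_forall_euclNorm_le_of_eventually <|
    eventually_forall_lt_euclNorm_mulVec hMc.continuousAt (hM0 ▸ hA)
      (W := intVec '' {w | w ≠ 0 ∧ w ∉ S1 A'}) (syst1_nonneg A') hδ
      (by rintro _ ⟨w, ⟨hw, hwS⟩, rfl⟩; rw [hM0]; exact hgap w hw hwS)
  refine ⟨ε, hε, fun x hx0 hxε => ?_⟩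
  obtain ⟨j, hj, hj0, k, hk⟩ := exists_isMin_neg_and_ne_of_sum_eq_zero (sum_diagExponent x)
    (diagExponent_ne_zero fun h => hx0.ne' (by simp [h, euclNorm]))
  simp only [← apply_dite Real.exp]
  refine not_wellRounded_mul_diagonal_exp_mul_inv hA hv hB
    (fun i => ((hS ▸ ⟨i, Or.inl rfl⟩ : v i ∈ S1 A')).2) hj hj0.le hk fun w hw hwv => ?_
  exact hεM x hxε (intVec w) ⟨w, ⟨hw, hS ▸ hwv⟩, rfl⟩

/-- if `A` is well-rounded with exactly the `2n` shortest vectors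
`{±v₁,…,±v_n}`, `B` is the matrix with columns `v₁,…,v_n` and `D(x)` the diagonal
matrix `diag(e^{x₁},…,e^{x_{n-1}}, e^{-x₁-⋯-x_{n-1}})`, then for all sufficiently
small `x ≠ 0` the element `A·B·D(x)·B⁻¹` is not well-rounded. -/
theorem stmt15 (n : ℕ) (hn : 2 ≤ n) (A : Matrix.SpecialLinearGroup (Fin n) ℝ)
    (hwr : WellRounded (A : Matrix (Fin n) (Fin n) ℝ))
    (v : Fin n → (Fin n → ℤ))
    (hv : LinearIndependent ℝ fun i => intVec (v i))
    (hS : S1 (A : Matrix (Fin n) (Fin n) ℝ) = {w | ∃ i, w = v i ∨ w = -(v i)})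
    (B : Matrix (Fin n) (Fin n) ℝ)
    (hB : B = Matrix.of fun i j => ((v j i : ℝ))) :
    ∃ ε > (0 : ℝ), ∀ x : Fin (n - 1) → ℝ, 0 < euclNorm x → euclNorm x ≤ ε →
      ¬ WellRounded ((A : Matrix (Fin n) (Fin n) ℝ) * B *
        Matrix.diagonal (fun j : Fin n =>
          if h : (j : ℕ) < n - 1 then Real.exp (x ⟨j, h⟩)
          else Real.exp (-∑ i, x i)) * B⁻¹) :=
  stmt15_general n A v hv hS B hB
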